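/- arXiv:1005.4724 — 2 statements merged into one kernel-verified Lean document; each statement's English description precedes it below -/
import Mathlib

section
/- Let (B, M, T) be a standard Young tableau of shape 3 × n (so |B| = |M| = |T| = n and B ∪ M ∪ T = {1,…,3n}), let A be the arc set of its m-diagram, and let δ be the circle-depth difference function. Then for every i ∈ {1,…,3n}: i ∈ B if and only if δ(i) = 1; i ∈ M if and only if δ(i) = 0; and i ∈ T if and only if δ(i) = −1. Consequently the depth map recovers the tableau from its m-diagram. -/
open scoped Classical

/-- The `j`-th smallest element (0-indexed) of a finite set of naturals (default `0`). -/
noncomputable def nthSmallest (s : Finset ℕ) (j : ℕ) : ℕ := (s.sort (· ≤ ·)).getD j 0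

/-- `(R, S)` satisfies the tableau condition: `|S| ≤ |R|` and for every `j ≤ |S|`, the `j`-th
smallest element of `S` is greater than the `j`-th smallest element of `R`. -/
def TableauCond (R S : Finset ℕ) : Prop :=
  S.card ≤ R.card ∧ ∀ j < S.card, nthSmallest R j < nthSmallest S j

/-- The greedy matching of `S` into `R`: processing the elements `i` of `S` in increasing
order, `greedy R S i = max { j ∈ R : j < i and j ≠ greedy R S i' for every i' ∈ S with i' < i }`
(with value `0` when this set is empty or `i ∉ S`). -/
noncomputable def greedy (R S : Finset ℕ) (i : ℕ) : ℕ :=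
  Nat.strongRecOn i fun i ih =>
    WithBot.unbotD 0 ((R.filter fun j => j < i ∧ ∀ i' (_ : i' ∈ S) (h : i' < i), j ≠ ih i' h).max)

/-- The arcs produced by the greedy matching of `S` into `R`, as ordered pairs
`(left endpoint, right endpoint)`. -/
noncomputable def arcsOf (R S : Finset ℕ) : Finset (ℕ × ℕ) :=
  S.image fun i => (greedy R S i, i)

/-- `(B, M, T)` (bottom, middle, top rows) encodes a three-row standard Young tableau with
`N` boxes: the rows partition `{1,…,N}`, row lengths weakly decrease from bottom to top, and
consecutive rows satisfy the tableau condition. -/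
def ThreeRowSYT (N : ℕ) (B M T : Finset ℕ) : Prop :=
  Disjoint B M ∧ Disjoint B T ∧ Disjoint M T ∧
  B ∪ M ∪ T = Finset.Icc 1 N ∧
  T.card ≤ M.card ∧ M.card ≤ B.card ∧
  TableauCond B M ∧ TableauCond M T

/-- Two arcs `(p,q)` and `(p',q')` (with `p<q`, `p'<q'`) cross if `p<p'<q<q'` or
`p'<p<q'<q`. -/
def Cross (a b : ℕ × ℕ) : Prop :=
  (a.1 < b.1 ∧ b.1 < a.2 ∧ a.2 < b.2) ∨ (b.1 < a.1 ∧ a.1 < b.2 ∧ b.2 < a.2)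

/-- `d(i+ε)`: the number of arcs `(a,b) ∈ A` with `a ≤ i < b`. -/
noncomputable def dPlus (A : Finset (ℕ × ℕ)) (i : ℕ) : ℕ :=
  (A.filter fun a => a.1 ≤ i ∧ i < a.2).card

/-- `d(i−ε)`: the number of arcs `(a,b) ∈ A` with `a < i ≤ b`. -/
noncomputable def dMinus (A : Finset (ℕ × ℕ)) (i : ℕ) : ℕ :=
  (A.filter fun a => a.1 < i ∧ i ≤ a.2).card

/-- The circle-depth difference function `δ(i) = d(i+ε) − d(i−ε)`. -/
noncomputable def deltaDepth (A : Finset (ℕ × ℕ)) (i : ℕ) : ℤ :=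
  (dPlus A i : ℤ) - (dMinus A i : ℤ)

/-! Every arc starts strictly before it ends, so `δ(i)` is the number of arcs with left endpoint
`i` minus the number with right endpoint `i`. When the rows have equal length, the greedy
matching of one row into the row below is a bijection, so the arcs of each level contribute
`[i ∈ lower row] - [i ∈ upper row]`, and summing the two levels gives `δ = [i ∈ B] - [i ∈ T]`.
The bijection rests on a counting fact: below any element of `S` there are more elements of
`R` than of `S`, so the greedy choice always finds a free element. -/

lemma nthSmallest_eq_orderEmbOfFin (s : Finset ℕ) {j : ℕ} (hj : j < s.card) :
    nthSmallest s j = s.orderEmbOfFin rfl ⟨j, hj⟩ := by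
  rw [nthSmallest, Finset.orderEmbOfFin_apply,
    List.getD_eq_getElem _ _ (by rwa [Finset.length_sort])]
  rfl

lemma exists_orderEmbOfFin_eq {s : Finset ℕ} {x : ℕ} (hx : x ∈ s) :
    ∃ m, s.orderEmbOfFin rfl m = x := by
  rwa [← Set.mem_range, Finset.range_orderEmbOfFin]

lemma card_filter_lt_orderEmbOfFin (s : Finset ℕ) (m : Fin s.card) :
    (s.filter (· < s.orderEmbOfFin rfl m)).card = m := by
  have : s.filter (· < s.orderEmbOfFin rfl m) = (Finset.Iio m).image (s.orderEmbOfFin rfl) := by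
    ext x
    simp only [Finset.mem_filter, Finset.mem_image, Finset.mem_Iio]
    constructor
    · rintro ⟨hx, hlt⟩
      obtain ⟨j, rfl⟩ := exists_orderEmbOfFin_eq hx
      exact ⟨j, (s.orderEmbOfFin rfl).lt_iff_lt.mp hlt, rfl⟩
    · rintro ⟨j, hj, rfl⟩
      exact ⟨Finset.orderEmbOfFin_mem s rfl j, (s.orderEmbOfFin rfl).lt_iff_lt.mpr hj⟩
  rw [this, Finset.card_image_of_injective _ (s.orderEmbOfFin rfl).injective]
  simp

noncomputable def greedyCandidates (R S : Finset ℕ) (i : ℕ) : Finset ℕ :=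
  R.filter fun j => j < i ∧ ∀ i' ∈ S, i' < i → j ≠ greedy R S i'

lemma greedy_eq_unbotD_max (R S : Finset ℕ) (i : ℕ) :
    greedy R S i = WithBot.unbotD 0 (greedyCandidates R S i).max := by
  have h : ∀ m, greedy R S m = Nat.lt_wfRel.wf.fix (fun i ih => WithBot.unbotD 0
      ((R.filter fun j => j < i ∧ ∀ i' (_ : i' ∈ S) (h : i' < i), j ≠ ih i' h).max)) m :=
    fun _ => rfl
  rw [h, WellFounded.fix_eq]
  simp only [← h]
  rfl

namespace TableauCond

variable {R S : Finset ℕ}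

/-- If `i` is the `m`-th smallest element of `S`, the `m + 1` smallest elements of `R` lie
below `i`. -/
lemma card_filter_lt_lt (hRS : TableauCond R S) {i : ℕ} (hi : i ∈ S) :
    (S.filter (· < i)).card < (R.filter (· < i)).card := by
  obtain ⟨m, rfl⟩ := exists_orderEmbOfFin_eq hi
  rw [card_filter_lt_orderEmbOfFin]
  have hmR : (m : ℕ) < R.card := m.2.trans_le hRS.1
  have hbelow : (Finset.Iic (⟨m, hmR⟩ : Fin R.card)).image (R.orderEmbOfFin rfl)
      ⊆ R.filter (· < S.orderEmbOfFin rfl m) := by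
    rintro _ hx
    obtain ⟨j, hj, rfl⟩ := Finset.mem_image.mp hx
    have hlt := hRS.2 m m.2
    rw [nthSmallest_eq_orderEmbOfFin R hmR, nthSmallest_eq_orderEmbOfFin S m.2] at hlt
    exact Finset.mem_filter.mpr ⟨Finset.orderEmbOfFin_mem R rfl j,
      ((R.orderEmbOfFin rfl).monotone (Finset.mem_Iic.mp hj)).trans_lt hlt⟩
  calc (m : ℕ) < ((Finset.Iic (⟨m, hmR⟩ : Fin R.card)).image (R.orderEmbOfFin rfl)).card := by
        rw [Finset.card_image_of_injective _ (R.orderEmbOfFin rfl).injective]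
        simp
    _ ≤ _ := Finset.card_le_card hbelow

lemma greedyCandidates_nonempty (hRS : TableauCond R S) {i : ℕ} (hi : i ∈ S) :
    (greedyCandidates R S i).Nonempty := by
  have hsub : R.filter (· < i) \ (S.filter (· < i)).image (greedy R S) ⊆
      greedyCandidates R S i := by
    intro j hj
    rw [Finset.mem_sdiff, Finset.mem_filter] at hj
    refine Finset.mem_filter.mpr ⟨hj.1.1, hj.1.2, fun i' hi' hlt heq => hj.2 ?_⟩
    exact Finset.mem_image.mpr ⟨i', Finset.mem_filter.mpr ⟨hi', hlt⟩, heq.symm⟩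
  rw [← Finset.card_pos]
  refine lt_of_lt_of_le ?_ (Finset.card_le_card hsub)
  have := hRS.card_filter_lt_lt hi
  have := Finset.card_image_le (s := S.filter (· < i)) (f := greedy R S)
  have := Finset.le_card_sdiff ((S.filter (· < i)).image (greedy R S)) (R.filter (· < i))
  omega

lemma greedy_mem_greedyCandidates (hRS : TableauCond R S) {i : ℕ} (hi : i ∈ S) :
    greedy R S i ∈ greedyCandidates R S i := by
  obtain ⟨a, ha⟩ := Finset.max_of_nonempty (hRS.greedyCandidates_nonempty hi)
  rw [greedy_eq_unbotD_max, ha]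
  exact Finset.mem_of_max ha

lemma greedy_mem (hRS : TableauCond R S) {i : ℕ} (hi : i ∈ S) : greedy R S i ∈ R :=
  (Finset.mem_filter.mp (hRS.greedy_mem_greedyCandidates hi)).1

lemma greedy_lt (hRS : TableauCond R S) {i : ℕ} (hi : i ∈ S) : greedy R S i < i :=
  (Finset.mem_filter.mp (hRS.greedy_mem_greedyCandidates hi)).2.1

lemma greedy_injOn (hRS : TableauCond R S) : Set.InjOn (greedy R S) S := by
  intro a ha b hb hab
  by_contra hne
  rcases lt_or_gt_of_ne hne with hlt | hlt
  · exact (Finset.mem_filter.mp (hRS.greedy_mem_greedyCandidates hb)).2.2 a ha hlt hab.symm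
  · exact (Finset.mem_filter.mp (hRS.greedy_mem_greedyCandidates ha)).2.2 b hb hlt hab

lemma image_greedy (hRS : TableauCond R S) (hcard : S.card = R.card) :
    S.image (greedy R S) = R := by
  refine Finset.eq_of_subset_of_card_le ?_ ?_
  · intro x hx
    obtain ⟨b, hb, rfl⟩ := Finset.mem_image.mp hx
    exact hRS.greedy_mem hb
  · rw [Finset.card_image_of_injOn hRS.greedy_injOn, hcard]

end TableauCond

lemma arcsOf_eq_map (R S : Finset ℕ) :
    arcsOf R S = S.map ⟨fun i => (greedy R S i, i), fun _ _ h => congrArg Prod.snd h⟩ := by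
  rw [arcsOf, Finset.map_eq_image]
  rfl

lemma card_filter_arcsOf_snd_eq (R S : Finset ℕ) (i : ℕ) :
    ((arcsOf R S).filter fun a => a.2 = i).card = if i ∈ S then 1 else 0 := by
  rw [arcsOf_eq_map, Finset.filter_map, Finset.card_map]
  exact (congrArg Finset.card (Finset.filter_eq' S i)).trans (by split_ifs <;> simp)

lemma TableauCond.card_filter_arcsOf_fst_eq {R S : Finset ℕ} (hRS : TableauCond R S)
    (hcard : S.card = R.card) (i : ℕ) :
    ((arcsOf R S).filter fun a => a.1 = i).card = if i ∈ R then 1 else 0 := by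
  rw [arcsOf_eq_map, Finset.filter_map, Finset.card_map]
  change (S.filter fun s => greedy R S s = i).card = _
  rw [← Finset.card_image_of_injOn (hRS.greedy_injOn.mono (Finset.filter_subset _ S)),
    ← Finset.filter_image (p := (· = i)), hRS.image_greedy hcard, Finset.filter_eq']
  split_ifs <;> simp

lemma disjoint_arcsOf {R S R' S' : Finset ℕ} (h : Disjoint S S') :
    Disjoint (arcsOf R S) (arcsOf R' S') := by
  refine Finset.disjoint_left.mpr ?_
  rintro _ ha hb
  obtain ⟨s, hs, rfl⟩ := Finset.mem_image.mp ha
  obtain ⟨s', hs', heq⟩ := Finset.mem_image.mp hb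
  cases congrArg Prod.snd heq
  exact Finset.disjoint_left.mp h hs hs'

section deltaDepth

variable {A A' : Finset (ℕ × ℕ)}

lemma deltaDepth_union (h : Disjoint A A') (i : ℕ) :
    deltaDepth (A ∪ A') i = deltaDepth A i + deltaDepth A' i := by
  simp only [deltaDepth, dPlus, dMinus, Finset.filter_union,
    Finset.card_union_of_disjoint (h.mono (Finset.filter_subset _ _) (Finset.filter_subset _ _))]
  push_cast
  ring

lemma deltaDepth_eq_card_fst_sub_card_snd (hA : ∀ a ∈ A, a.1 < a.2) (i : ℕ) :
    deltaDepth A i =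
      ((A.filter fun a => a.1 = i).card : ℤ) - ((A.filter fun a => a.2 = i).card : ℤ) := by
  have hPlus : dPlus A i
      = (A.filter fun a => a.1 < i ∧ i < a.2).card + (A.filter fun a => a.1 = i).card := by
    rw [dPlus, ← Finset.card_union_of_disjoint, ← Finset.filter_or]
    · exact congrArg Finset.card (Finset.filter_congr fun a ha => by have := hA a ha; omega)
    · exact Finset.disjoint_filter.mpr fun _ _ _ => by omega
  have hMinus : dMinus A i
      = (A.filter fun a => a.1 < i ∧ i < a.2).card + (A.filter fun a => a.2 = i).card := by
    rw [dMinus, ← Finset.card_union_of_disjoint, ← Finset.filter_or]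
    · exact congrArg Finset.card (Finset.filter_congr fun a ha => by have := hA a ha; omega)
    · exact Finset.disjoint_filter.mpr fun _ _ _ => by omega
  rw [deltaDepth, hPlus, hMinus]
  push_cast
  ring

end deltaDepth

lemma TableauCond.deltaDepth_arcsOf {R S : Finset ℕ} (hRS : TableauCond R S)
    (hcard : S.card = R.card) (i : ℕ) :
    deltaDepth (arcsOf R S) i = (if i ∈ R then 1 else 0) - (if i ∈ S then 1 else 0) := by
  have hlt : ∀ a ∈ arcsOf R S, a.1 < a.2 := by
    intro a ha
    obtain ⟨b, hb, rfl⟩ := Finset.mem_image.mp ha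
    exact hRS.greedy_lt hb
  rw [deltaDepth_eq_card_fst_sub_card_snd hlt, hRS.card_filter_arcsOf_fst_eq hcard,
    card_filter_arcsOf_snd_eq]
  push_cast
  rfl

/-- For a standard Young tableau of shape `3 × n`, the circle-depth difference function of
the arc set of its m-diagram detects the rows: `δ(i) = 1` exactly on the bottom row,
`δ(i) = 0` exactly on the middle row, and `δ(i) = −1` exactly on the top row. Hence the
depth map recovers the tableau from its m-diagram. -/
theorem depth_map_recovers_tableau (n : ℕ) (B M T : Finset ℕ)
    (h : ThreeRowSYT (3 * n) B M T)
    (hB : B.card = n) (hM : M.card = n) (hT : T.card = n) :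
    ∀ i ∈ Finset.Icc 1 (3 * n),
      (i ∈ B ↔ deltaDepth (arcsOf B M ∪ arcsOf M T) i = 1) ∧
      (i ∈ M ↔ deltaDepth (arcsOf B M ∪ arcsOf M T) i = 0) ∧
      (i ∈ T ↔ deltaDepth (arcsOf B M ∪ arcsOf M T) i = -1) := by
  obtain ⟨hBM, hBT, hMT, hrows, -, -, hTBM, hTMT⟩ := h
  intro i hi
  have hδ : deltaDepth (arcsOf B M ∪ arcsOf M T) i =
      (if i ∈ B then 1 else 0) - (if i ∈ T then 1 else 0) := by
    rw [deltaDepth_union (disjoint_arcsOf hMT), hTBM.deltaDepth_arcsOf (hM.trans hB.symm),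
      hTMT.deltaDepth_arcsOf (hT.trans hM.symm)]
    ring
  rw [← hrows] at hi
  rw [hδ]
  rcases Finset.mem_union.mp hi with hi | hiT
  · rcases Finset.mem_union.mp hi with hiB | hiM
    · simp [hiB, Finset.disjoint_left.mp hBM hiB, Finset.disjoint_left.mp hBT hiB]
    · simp [hiM, Finset.disjoint_right.mp hBM hiM, Finset.disjoint_left.mp hMT hiM]
  · simp [hiT, Finset.disjoint_right.mp hBT hiT, Finset.disjoint_right.mp hMT hiT]
end

section
/- Let T be a standard Young tableau with N boxes and r rows, and let T′ be a standard Young tableau with N′ boxes and r′ rows such that r′ ≥ r and T′ is rectangular (all rows of T′ have the same length). Then for every i ≤ N, the arc set of the shuffle T′ ↦ᵢ T equals { (σ(a), σ(b)) : (a,b) ∈ arcs(T) } ∪ { (a + i, b + i) : (a,b) ∈ arcs(T′) }, where σ(x) = x if x ≤ i and σ(x) = x + N′ if x > i. -/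
open scoped Classical

/-- A list of rows (bottom row first) encodes a standard Young tableau with `N` boxes:
the rows are nonempty, pairwise disjoint, partition `{1,…,N}`, and each consecutive pair of
rows satisfies the tableau condition (which forces weakly decreasing row lengths). -/
def IsSYT (N : ℕ) (L : List (Finset ℕ)) : Prop :=
  (∀ s ∈ L, s.Nonempty) ∧
  L.Pairwise Disjoint ∧
  L.foldr (· ∪ ·) ∅ = Finset.Icc 1 N ∧
  (L.map Finset.card).Chain' (fun c c' => c' ≤ c) ∧
  L.Chain' TableauCond

/-- The arc set of the m-diagram of a tableau: the union over consecutive pairs of rows of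
the arcs of the greedy matching of the upper row into the lower row. -/
noncomputable def arcsSYT (L : List (Finset ℕ)) : Finset (ℕ × ℕ) :=
  (L.zip L.tail).foldr (fun p acc => arcsOf p.1 p.2 ∪ acc) ∅

/-- The shuffle of a tableau `L'` (with `N'` boxes) into a tableau `L` at position `i`:
row `s` of the shuffle is `{σ(x) : x ∈ L_s} ∪ {x + i : x ∈ L'_s}`, where `σ(x) = x` for
`x ≤ i` and `σ(x) = x + N'` for `x > i`. -/
noncomputable def shuffleRows (L L' : List (Finset ℕ)) (i N' : ℕ) : List (Finset ℕ) :=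
  (List.range (max L.length L'.length)).map fun s =>
    ((L.getD s ∅).image fun x => if x ≤ i then x else x + N') ∪
    ((L'.getD s ∅).image fun x => x + i)

/-! The greedy partner of `n` depends only on the two rows below `n`: it is the largest element
of the lower row not used by smaller elements of the upper row. In the shuffle the rows of `T'`
fill the window `(i, i + N']`, which misses the image of `σ`. An element `x + i` from `T'` sees
below it only elements `≤ i` of `T` besides the shifted rows of `T'`, so it keeps its shifted
partner, which beats everything coming from `T`. An element `σ y` from `T` sees the rows of `T'`
either not at all or in full; in the latter case, `T'` being rectangular, the greedy matching
between its rows is a bijection, so the window is used up and `σ y` keeps `σ` of its partner. -/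

open Finset

lemma nthSmallest_eq_nth (s : Finset ℕ) (j : ℕ) : nthSmallest s j = Nat.nth (· ∈ s) j := by
  rw [Nat.nth_eq_getD_sort (p := (· ∈ s)) s.finite_toSet, nthSmallest,
    Finset.finite_toSet_toFinset]

lemma count_mem_eq_card_filter_lt (s : Finset ℕ) (n : ℕ) :
    Nat.count (· ∈ s) n = #(s.filter (· < n)) := by
  rw [Nat.count_eq_card_filter_range]
  congr 1
  ext x
  simp [and_comm]

lemma TableauCond.card_filter_lt_lt_s12 {R S : Finset ℕ} (h : TableauCond R S) {x : ℕ} (hx : x ∈ S) :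
    #(S.filter (· < x)) < #(R.filter (· < x)) := by
  have hfin : (Set.ofPred (· ∈ R)).Finite := R.finite_toSet
  have hcardR : #hfin.toFinset = #R := congrArg card R.finite_toSet_toFinset
  rw [← count_mem_eq_card_filter_lt, ← count_mem_eq_card_filter_lt]
  have hnthS : Nat.nth (· ∈ S) (Nat.count (· ∈ S) x) = x := Nat.nth_count hx
  set k := Nat.count (· ∈ S) x
  have hkS : k < #S := by
    simpa [Finset.finite_toSet_toFinset] using Nat.count_lt_card S.finite_toSet hx
  have hkR : k < #hfin.toFinset := hcardR ▸ hkS.trans_le h.1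
  have hnth : Nat.nth (· ∈ R) k < x := by
    simpa only [nthSmallest_eq_nth, hnthS] using h.2 k hkS
  calc k < k + 1 := k.lt_succ_self
    _ = Nat.count (· ∈ R) (Nat.nth (· ∈ R) k + 1) := by
      rw [Nat.count_succ, Nat.count_nth_of_lt_card_finite hfin hkR,
        if_pos (Nat.nth_mem_of_lt_card hfin hkR)]
    _ ≤ Nat.count (· ∈ R) x := Nat.count_monotone _ hnth

def available (R S : Finset ℕ) (g : ℕ → ℕ) (n : ℕ) : Finset ℕ :=
  R.filter (· < n) \ (S.filter (· < n)).image g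

lemma unbotD_max_eq_sup (s : Finset ℕ) : s.max.unbotD 0 = s.sup id := by
  rcases s.eq_empty_or_nonempty with rfl | hs
  · rfl
  · rw [← Finset.coe_max' hs, WithBot.unbotD_coe, Finset.max'_eq_sup', Finset.sup'_eq_sup]

lemma greedy_eq (R S : Finset ℕ) (n : ℕ) :
    greedy R S n = (available R S (greedy R S) n).sup id := by
  rw [greedy, Nat.strongRecOn, WellFounded.fix_eq, ← unbotD_max_eq_sup]
  congr 3
  ext j
  simp only [available, mem_filter, mem_sdiff, mem_image]
  constructor
  · rintro ⟨hj, hjn, havoid⟩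
    exact ⟨⟨hj, hjn⟩, fun ⟨i', ⟨hi', hi'n⟩, he⟩ => havoid i' hi' hi'n he.symm⟩
  · rintro ⟨⟨hj, hjn⟩, hused⟩
    exact ⟨hj, hjn, fun i' hi' hi'n he => hused ⟨i', ⟨hi', hi'n⟩, he.symm⟩⟩

lemma eqOn_greedy_of_forall_eq {R S : Finset ℕ} {g : ℕ → ℕ}
    (hg : ∀ n ∈ S, g n = (available R S g n).sup id) : Set.EqOn g (greedy R S) S := by
  intro n
  induction n using Nat.strong_induction_on with
  | _ n ih =>
    intro hn
    rw [hg n hn, greedy_eq]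
    have himage : (S.filter (· < n)).image g = (S.filter (· < n)).image (greedy R S) :=
      image_congr fun m hm => ih m (mem_filter.1 hm).2 (mem_filter.1 hm).1
    simp only [available, himage]

lemma greedy_le_self (R S : Finset ℕ) (n : ℕ) : greedy R S n ≤ n := by
  rw [greedy_eq]
  refine Finset.sup_le fun j hj => ?_
  simp only [available, mem_sdiff, mem_filter] at hj
  exact hj.1.2.le

lemma TableauCond.greedy_mem_available {R S : Finset ℕ} (h : TableauCond R S) {x : ℕ}
    (hx : x ∈ S) : greedy R S x ∈ available R S (greedy R S) x := by
  have hne : (available R S (greedy R S) x).Nonempty := by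
    rw [← card_pos, available]
    have := (card_image_le (s := S.filter (· < x)) (f := greedy R S)).trans_lt
      (h.card_filter_lt_lt_s12 hx)
    have := le_card_sdiff ((S.filter (· < x)).image (greedy R S)) (R.filter (· < x))
    omega
  obtain ⟨j, hj, hjeq⟩ := exists_mem_eq_sup _ hne id
  rw [greedy_eq, hjeq]
  exact hj

lemma TableauCond.greedy_mem_s12 {R S : Finset ℕ} (h : TableauCond R S) {x : ℕ} (hx : x ∈ S) :
    greedy R S x ∈ R :=
  (mem_filter.1 (mem_sdiff.1 (h.greedy_mem_available hx)).1).1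

lemma TableauCond.injOn_greedy {R S : Finset ℕ} (h : TableauCond R S) :
    Set.InjOn (greedy R S) S := by
  have key : ∀ a ∈ S, ∀ b ∈ S, a < b → greedy R S a ≠ greedy R S b := fun a ha b hb hab he =>
    (mem_sdiff.1 (h.greedy_mem_available hb)).2 (mem_image.2 ⟨a, mem_filter.2 ⟨ha, hab⟩, he⟩)
  intro a ha b hb he
  by_contra hne
  rcases lt_or_gt_of_ne hne with hab | hba
  · exact key a ha b hb hab he
  · exact key b hb a ha hba he.symm

lemma TableauCond.image_greedy_s12 {R S : Finset ℕ} (h : TableauCond R S) (hcard : #R = #S) :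
    S.image (greedy R S) = R :=
  eq_of_subset_of_card_le (image_subset_iff.2 fun _ hx => h.greedy_mem_s12 hx)
    (hcard ▸ (card_image_of_injOn h.injOn_greedy).ge)

lemma union_sdiff_union_of_disjoint {α : Type*} [DecidableEq α] {A B C : Finset α}
    (h : Disjoint A C) : (A ∪ C) \ (B ∪ C) = A \ B := by
  ext a
  have := h.notMem_of_mem_left_finset (a := a)
  simp only [mem_sdiff, mem_union]
  tauto

section Merge

variable (i N' : ℕ)

/-- The map `σ` of the shuffle. -/
def gapShift (x : ℕ) : ℕ := if x ≤ i then x else x + N'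

/-- The row of `T' ↦ᵢ T` built from the rows `R` of `T` and `R'` of `T'` of the same index. -/
noncomputable def mergeRow (R R' : Finset ℕ) : Finset ℕ :=
  R.image (gapShift i N') ∪ R'.image (· + i)

variable {i N'}

lemma gapShift_strictMono : StrictMono (gapShift i N') := by
  intro a b h
  unfold gapShift
  split_ifs <;> omega

lemma gapShift_ne_add {x : ℕ} (hx : x ∈ Icc 1 N') (y : ℕ) : gapShift i N' y ≠ x + i := by
  rw [mem_Icc] at hx
  unfold gapShift
  split_ifs <;> omega

lemma filter_mergeRow_lt (R R' : Finset ℕ) (n : ℕ) :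
    (mergeRow i N' R R').filter (· < n) =
      (R.filter (gapShift i N' · < n)).image (gapShift i N') ∪
        (R'.filter (· + i < n)).image (· + i) := by
  simp only [mergeRow, filter_union, filter_image]

variable (i N') (R S R' S' : Finset ℕ)

/-- The expected greedy matching of merged rows: that of `T` transported by `σ` outside the
window `(i, i + N']`, that of `T'` shifted by `i` inside it. -/
noncomputable def mergeMatch (m : ℕ) : ℕ :=
  if m ≤ i then greedy R S m
  else if m ≤ i + N' then greedy R' S' (m - i) + i
  else gapShift i N' (greedy R S (m - N'))

variable {i N' R S R' S'}

lemma mergeMatch_gapShift (y : ℕ) :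
    mergeMatch i N' R S R' S' (gapShift i N' y) = gapShift i N' (greedy R S y) := by
  have hle := greedy_le_self R S y
  unfold mergeMatch gapShift
  split_ifs <;> first | omega | simp_all

lemma mergeMatch_add {x : ℕ} (hx : x ∈ Icc 1 N') :
    mergeMatch i N' R S R' S' (x + i) = greedy R' S' x + i := by
  rw [mem_Icc] at hx
  unfold mergeMatch
  split_ifs <;> first | omega | simp

lemma image_mergeMatch_filter_mergeRow_lt (hS' : S' ⊆ Icc 1 N') (n : ℕ) :
    ((mergeRow i N' S S').filter (· < n)).image (mergeMatch i N' R S R' S') =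
      (S.filter (gapShift i N' · < n)).image (gapShift i N' ∘ greedy R S) ∪
        (S'.filter (· + i < n)).image (greedy R' S' · + i) := by
  rw [filter_mergeRow_lt, image_union, image_image, image_image]
  congr 1
  · exact image_congr fun y _ => mergeMatch_gapShift y
  · exact image_congr fun x hx => mergeMatch_add (hS' (mem_filter.1 hx).1)

lemma available_mergeRow_gapShift (hR' : R' ⊆ Icc 1 N') (hS' : S' ⊆ Icc 1 N')
    (h' : TableauCond R' S') (hcard : #R' = #S') (y : ℕ) :
    available (mergeRow i N' R R') (mergeRow i N' S S') (mergeMatch i N' R S R' S')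
        (gapShift i N' y) =
      (available R S (greedy R S) y).image (gapShift i N') := by
  have hmatched : (S'.filter (· + i < gapShift i N' y)).image (greedy R' S') =
      R'.filter (· + i < gapShift i N' y) := by
    by_cases hy : y ≤ i
    · have hlow : ∀ z ∈ Icc 1 N', ¬ z + i < gapShift i N' y := fun z hz => by
        rw [mem_Icc] at hz; simp only [gapShift, if_pos hy]; omega
      rw [filter_false_of_mem fun z hz => hlow z (hS' hz),
        filter_false_of_mem fun z hz => hlow z (hR' hz), image_empty]
    · have hhigh : ∀ z ∈ Icc 1 N', z + i < gapShift i N' y := fun z hz => by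
        rw [mem_Icc] at hz; simp only [gapShift, if_neg hy]; omega
      rw [filter_true_of_mem fun z hz => hhigh z (hS' hz),
        filter_true_of_mem fun z hz => hhigh z (hR' hz), h'.image_greedy_s12 hcard]
  have hdisj : Disjoint ((R.filter (· < y)).image (gapShift i N'))
      ((R'.filter (· + i < gapShift i N' y)).image (· + i)) := by
    simp only [disjoint_left, mem_image, not_exists, not_and]
    rintro _ ⟨a, -, rfl⟩ x hx
    exact (gapShift_ne_add (hR' (mem_filter.1 hx).1) a).symm
  have hT' : (S'.filter (· + i < gapShift i N' y)).image (greedy R' S' · + i) =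
      (R'.filter (· + i < gapShift i N' y)).image (· + i) := by
    rw [← hmatched, image_image]
    rfl
  have hlt : ∀ T : Finset ℕ, T.filter (gapShift i N' · < gapShift i N' y) = T.filter (· < y) :=
    fun T => filter_congr fun _ _ => gapShift_strictMono.lt_iff_lt
  rw [available, filter_mergeRow_lt, image_mergeMatch_filter_mergeRow_lt hS', hT', hlt, hlt,
    ← image_image, union_sdiff_union_of_disjoint hdisj, available,
    image_sdiff _ _ gapShift_strictMono.injective]

lemma sup_available_mergeRow_add (hR' : R' ⊆ Icc 1 N') (hS' : S' ⊆ Icc 1 N')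
    (h' : TableauCond R' S') {x : ℕ} (hx : x ∈ S') :
    (available (mergeRow i N' R R') (mergeRow i N' S S') (mergeMatch i N' R S R' S')
        (x + i)).sup id = greedy R' S' x + i := by
  have hxN := mem_Icc.1 (hS' hx)
  have hgx := h'.greedy_mem_available hx
  have hgxN := mem_Icc.1 (hR' (h'.greedy_mem_s12 hx))
  rw [available, filter_mergeRow_lt, image_mergeMatch_filter_mergeRow_lt hS']
  simp only [add_lt_add_iff_right]
  apply le_antisymm
  · refine Finset.sup_le fun b hb => ?_
    simp only [mem_sdiff, mem_union, mem_image, mem_filter, not_or, not_exists, not_and] at hb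
    obtain ⟨⟨a, ⟨-, ha⟩, rfl⟩ | ⟨r, ⟨hr, hrx⟩, rfl⟩, -, hfree⟩ := hb
    · simp only [gapShift, id_eq] at ha ⊢
      split_ifs at ha ⊢ <;> omega
    · have hr : r ∈ available R' S' (greedy R' S') x := by
        simp only [available, mem_sdiff, mem_filter, mem_image, not_exists, not_and]
        exact ⟨⟨hr, hrx⟩, fun x' hx' he => hfree x' hx' (by rw [he])⟩
      have : r ≤ greedy R' S' x := by
        rw [greedy_eq R' S' x]
        exact le_sup (f := id) hr
      exact Nat.add_le_add_right this i
  · refine le_sup (f := id) ?_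
    simp only [available, mem_sdiff, mem_filter, mem_image, not_exists, not_and] at hgx
    simp only [mem_sdiff, mem_union, mem_image, mem_filter, not_or, not_exists, not_and,
      Function.comp_apply]
    refine ⟨Or.inr ⟨_, hgx.1, rfl⟩, fun a _ => gapShift_ne_add (hR' (h'.greedy_mem_s12 hx)) _,
      fun x' hx' he => hgx.2 x' hx' (by omega)⟩

lemma eqOn_mergeMatch_greedy (hR' : R' ⊆ Icc 1 N') (hS' : S' ⊆ Icc 1 N')
    (h' : TableauCond R' S') (hcard : #R' = #S') :
    Set.EqOn (mergeMatch i N' R S R' S') (greedy (mergeRow i N' R R') (mergeRow i N' S S'))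
      (mergeRow i N' S S') := by
  refine eqOn_greedy_of_forall_eq fun m hm => ?_
  rcases mem_union.1 hm with hm | hm <;> obtain ⟨z, hz, rfl⟩ := mem_image.1 hm
  · rw [mergeMatch_gapShift, available_mergeRow_gapShift hR' hS' h' hcard, sup_image,
      greedy_eq R S z,
      apply_sup_eq_sup_comp_of_linearOrder _ gapShift_strictMono.monotone rfl]
    rfl
  · rw [mergeMatch_add (hS' hz), sup_available_mergeRow_add hR' hS' h' hz]

lemma arcsOf_mergeRow (hR' : R' ⊆ Icc 1 N') (hS' : S' ⊆ Icc 1 N')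
    (h' : TableauCond R' S') (hcard : #R' = #S') :
    arcsOf (mergeRow i N' R R') (mergeRow i N' S S') =
      (arcsOf R S).image (fun a => (gapShift i N' a.1, gapShift i N' a.2)) ∪
        (arcsOf R' S').image (fun a => (a.1 + i, a.2 + i)) := by
  have hmatch := eqOn_mergeMatch_greedy (i := i) (R := R) (S := S) hR' hS' h' hcard
  have harcs : arcsOf (mergeRow i N' R R') (mergeRow i N' S S') =
      (mergeRow i N' S S').image (fun m => (mergeMatch i N' R S R' S' m, m)) :=
    image_congr fun m hm => by rw [hmatch hm]
  rw [harcs, mergeRow, image_union, arcsOf, arcsOf]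
  simp only [image_image]
  congr 1 <;> refine image_congr fun z hz => ?_ <;> simp only [Function.comp_apply]
  · rw [mergeMatch_gapShift]
  · rw [mergeMatch_add (hS' hz)]

end Merge

lemma arcsSYT_eq_biUnion (L : List (Finset ℕ)) {m : ℕ} (hm : L.length ≤ m + 1) :
    arcsSYT L = (range m).biUnion fun s => arcsOf (L.getD s ∅) (L.getD (s + 1) ∅) := by
  induction L generalizing m with
  | nil => simp [arcsSYT, arcsOf, Finset.ext_iff]
  | cons a t ih =>
    cases t with
    | nil => simp [arcsSYT, arcsOf, Finset.ext_iff]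
    | cons b t =>
      obtain ⟨m, rfl⟩ : ∃ m', m = m' + 1 := ⟨m - 1, by simp at hm; omega⟩
      change arcsOf a b ∪ arcsSYT (b :: t) = _
      rw [ih (by simpa using hm), range_add_one', biUnion_insert, map_eq_image, image_biUnion]
      rfl

lemma getD_subset_foldr_union (L : List (Finset ℕ)) (s : ℕ) :
    L.getD s ∅ ⊆ L.foldr (· ∪ ·) ∅ := by
  induction L generalizing s with
  | nil => simp
  | cons a t ih =>
    cases s with
    | zero => exact subset_union_left
    | succ s => exact (ih s).trans subset_union_right

lemma List.IsChain.rel_getD {α : Type*} {r : α → α → Prop} {L : List α} (h : L.IsChain r)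
    {s : ℕ} (hs : s + 1 < L.length) (d : α) : r (L.getD s d) (L.getD (s + 1) d) := by
  rw [List.getD_eq_getElem _ _ (by omega), List.getD_eq_getElem _ _ hs]
  exact List.isChain_iff_getElem.1 h s hs

lemma shuffleRows_getD (L L' : List (Finset ℕ)) (i N' : ℕ) {s : ℕ}
    (hs : s < max L.length L'.length) :
    (shuffleRows L L' i N').getD s ∅ = mergeRow i N' (L.getD s ∅) (L'.getD s ∅) := by
  rw [shuffleRows, List.getD_eq_getElem _ _ (by simpa using hs)]
  simp only [List.getD_eq_getElem?_getD, List.getElem_map, List.getElem_range, mergeRow]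
  rfl

theorem shuffle_rectangular_arcs_general (N' : ℕ) (L L' : List (Finset ℕ))
    (hT' : IsSYT N' L')
    (hrows : L.length ≤ L'.length)
    (hrect : ∀ s ∈ L', ∀ s' ∈ L', s.card = s'.card)
    (i : ℕ) :
    arcsSYT (shuffleRows L L' i N') =
      (arcsSYT L).image (fun a =>
        ((if a.1 ≤ i then a.1 else a.1 + N'), (if a.2 ≤ i then a.2 else a.2 + N'))) ∪
      (arcsSYT L').image (fun a => (a.1 + i, a.2 + i)) := by
  obtain ⟨-, -, hcover, -, hchain⟩ := hT'
  have hmax : max L.length L'.length = L'.length := max_eq_right hrows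
  have hlen : (shuffleRows L L' i N').length = L'.length := by simp [shuffleRows, hmax]
  rw [arcsSYT_eq_biUnion _ (m := L'.length - 1) (by omega),
    arcsSYT_eq_biUnion L (m := L'.length - 1) (by omega),
    arcsSYT_eq_biUnion L' (m := L'.length - 1) (by omega), biUnion_image, biUnion_image,
    ← biUnion_union]
  refine biUnion_congr rfl fun s hs => ?_
  have hs : s + 1 < L'.length := by rw [mem_range] at hs; omega
  have hrow : ∀ t, L'.getD t ∅ ⊆ Icc 1 N' := hcover ▸ getD_subset_foldr_union L'
  have hmem : ∀ t < L'.length, L'.getD t ∅ ∈ L' := fun t ht => by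
    rw [List.getD_eq_getElem _ _ ht]; exact List.getElem_mem ht
  rw [shuffleRows_getD L L' i N' (by omega), shuffleRows_getD L L' i N' (by omega)]
  exact arcsOf_mergeRow (hrow s) (hrow (s + 1)) (hchain.rel_getD hs ∅)
    (hrect _ (hmem s (by omega)) _ (hmem (s + 1) hs))

/-- If `T'` has at least as many rows as `T` and `T'` is rectangular, then for every
`i ≤ N` the arc set of the shuffle `T' ↦ᵢ T` is
`{(σ(a), σ(b)) : (a,b) ∈ arcs(T)} ∪ {(a + i, b + i) : (a,b) ∈ arcs(T')}`,
where `σ(x) = x` for `x ≤ i` and `σ(x) = x + N'` for `x > i`. -/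
theorem shuffle_rectangular_arcs (N N' : ℕ) (L L' : List (Finset ℕ))
    (hT : IsSYT N L) (hT' : IsSYT N' L')
    (hrows : L.length ≤ L'.length)
    (hrect : ∀ s ∈ L', ∀ s' ∈ L', s.card = s'.card)
    (i : ℕ) (hi : i ≤ N) :
    arcsSYT (shuffleRows L L' i N') =
      (arcsSYT L).image (fun a =>
        ((if a.1 ≤ i then a.1 else a.1 + N'), (if a.2 ≤ i then a.2 else a.2 + N'))) ∪
      (arcsSYT L').image (fun a => (a.1 + i, a.2 + i)) :=
  shuffle_rectangular_arcs_general N' L L' hT' hrows hrect i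
end
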